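/- arXiv:1711.08446 — 2 statements merged into one kernel-verified Lean document; each statement's English description precedes it below -/
import Mathlib

section
/- For all real numbers x ≥ 1 and y ≥ 1, it holds that 2x·log x + 2y·log y + 2xy/(x+y) ≤ 2(x+y)·log(x+y). -/
theorem stmt1 (x y : ℝ) (hx : 1 ≤ x) (hy : 1 ≤ y) :
    2 * x * Real.log x + 2 * y * Real.log y + 2 * x * y / (x + y)
      ≤ 2 * (x + y) * Real.log (x + y) := by
  have hx0 : (0:ℝ) < x := lt_of_lt_of_le one_pos hx
  have hy0 : (0:ℝ) < y := lt_of_lt_of_le one_pos hy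
  have hs : (0:ℝ) < x + y := by linarith
  have h1 : Real.log x - Real.log (x + y) ≤ x / (x + y) - 1 := by
    have h := Real.log_le_sub_one_of_pos (show 0 < x / (x + y) by positivity)
    rwa [Real.log_div hx0.ne' hs.ne'] at h
  have h2 : Real.log y - Real.log (x + y) ≤ y / (x + y) - 1 := by
    have h := Real.log_le_sub_one_of_pos (show 0 < y / (x + y) by positivity)
    rwa [Real.log_div hy0.ne' hs.ne'] at h
  have h1' := mul_le_mul_of_nonneg_left h1 hx0.le
  have h2' := mul_le_mul_of_nonneg_left h2 hy0.le
  have ht : (x + y) * (x + y)⁻¹ = 1 := mul_inv_cancel₀ hs.ne'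
  rw [div_eq_mul_inv] at h1' h2' ⊢
  have hts : (x + y) * (x + y) * (x + y)⁻¹ = x + y := by
    rw [mul_assoc, ht, mul_one]
  have hxyt : 0 ≤ x * y * (x + y)⁻¹ := by positivity
  nlinarith [hts, hxyt, h1', h2']
end

section
/- Let X_1, ..., X_k be i.i.d. Exp(1) random variables, let M = max_i X_i, and for a constant c > 0 let Z = |{i : X_i ≥ M − c}|. Then E[Z] = 1 + Σ_{i=1}^{k−1} (1 − e^{−c})^i ≤ e^c. -/
/-!
`Z` is the sum of the indicators of the events `A i = {∀ j, X j ≤ X i + c}`. Since the samples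
are i.i.d. with CDF `F`, conditioning on `X i = t` gives `P(A i) = ∫ F(t + c) ^ (k - 1) dF(t)`,
which for `Exp(1)` is `∫₀^∞ e^{-t} (1 - e^{-(t+c)}) ^ (k - 1) dt = e^c (1 - r ^ k) / k` with
`r = 1 - e^{-c}`. Hence `E[Z] = e^c (1 - r ^ k) = e^c (1 - r) ∑_{i<k} r ^ i = ∑_{i<k} r ^ i`,
and `e^c (1 - r ^ k) ≤ e^c`.
-/

open MeasureTheory ProbabilityTheory Real Set Filter Topology
open scoped Finset

theorem integral_card_filter {Ω ι : Type*} [MeasurableSpace Ω] [Fintype ι] (μ : Measure Ω)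
    [IsFiniteMeasure μ] (p : ι → Ω → Prop) [∀ i ω, Decidable (p i ω)]
    (hp : ∀ i, NullMeasurableSet {ω | p i ω} μ) :
    ∫ ω, (#{i | p i ω} : ℝ) ∂μ = ∑ i, μ.real {ω | p i ω} := by
  have hcard (ω : Ω) : (#{i | p i ω} : ℝ) = ∑ i, {ω | p i ω}.indicator 1 ω := by
    simp [Set.indicator_apply]
  simp_rw [hcard]
  rw [integral_finsetSum _ fun i _ => (integrable_const 1).indicator₀ (hp i)]
  simp_rw [integral_indicator₀ (hp _)]
  simp

theorem measurableSet_setOf_forall_le_add {ι : Type*} [Countable ι] (i : ι) (c : ℝ) :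
    MeasurableSet {x : ι → ℝ | ∀ j, x j ≤ x i + c} := by
  simp only [ofPred_forall]
  exact .iInter fun j => measurableSet_le (measurable_pi_apply j) (by fun_prop)

theorem pi_setOf_forall_le_add (μ : Measure ℝ) [SigmaFinite μ] (n : ℕ) (i : Fin (n + 1))
    {c : ℝ} (hc : 0 ≤ c) :
    Measure.pi (fun _ => μ) {x | ∀ j, x j ≤ x i + c} = ∫⁻ t, μ (Iic (t + c)) ^ n ∂μ := by
  set T : Set (ℝ × (Fin n → ℝ)) := {p | ∀ j, p.2 j ≤ p.1 + c}
  have hT : MeasurableSet T := by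
    simp only [T, ofPred_forall]
    exact .iInter fun j =>
      measurableSet_le ((measurable_pi_apply j).comp measurable_snd) (measurable_fst.add_const c)
  have hpre : {x : Fin (n + 1) → ℝ | ∀ j, x j ≤ x i + c} =
      MeasurableEquiv.piFinSuccAbove (fun _ => ℝ) i ⁻¹' T := by
    ext x
    simp [T, Fin.forall_iff_succAbove i, hc, Fin.removeNth]
  have hslice (t : ℝ) : Prod.mk t ⁻¹' T = univ.pi fun _ => Iic (t + c) := by
    ext y; simp [T, Pi.le_def]
  rw [hpre, (measurePreserving_piFinSuccAbove (fun _ => μ) i).measure_preimage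
    hT.nullMeasurableSet, Measure.prod_apply hT]
  simp only [hslice, Measure.pi_pi, Finset.prod_const, Finset.card_univ, Fintype.card_fin]

theorem measureReal_pi_setOf_forall_le_add (μ : Measure ℝ) [IsProbabilityMeasure μ] (n : ℕ)
    (i : Fin (n + 1)) {c : ℝ} (hc : 0 ≤ c) :
    (Measure.pi fun _ => μ).real {x | ∀ j, x j ≤ x i + c} = ∫ t, cdf μ (t + c) ^ n ∂μ := by
  rw [measureReal_def, pi_setOf_forall_le_add μ n i hc, integral_eq_lintegral_of_nonneg_ae
    (ae_of_all _ fun t => pow_nonneg (cdf_nonneg μ _) n)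
    (((cdf μ).mono.measurable.comp (measurable_add_const c)).pow_const n).aestronglyMeasurable]
  simp_rw [ENNReal.ofReal_pow (cdf_nonneg μ _), ofReal_cdf]

theorem measureReal_forall_le_add_of_iid {Ω : Type*} [MeasurableSpace Ω] {P : Measure Ω}
    {μ : Measure ℝ} [IsProbabilityMeasure μ] {n : ℕ} {X : Fin (n + 1) → Ω → ℝ}
    (hX : ∀ i, AEMeasurable (X i) P) (hindep : iIndepFun X P) (hdist : ∀ i, P.map (X i) = μ)
    (i : Fin (n + 1)) {c : ℝ} (hc : 0 ≤ c) :
    P.real {ω | ∀ j, X j ω ≤ X i ω + c} = ∫ t, cdf μ (t + c) ^ n ∂μ := by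
  rw [← measureReal_pi_setOf_forall_le_add μ n i hc, ← funext hdist,
    ← hindep.map_fun_eq_pi_map hX, measureReal_def, measureReal_def,
    Measure.map_apply_of_aemeasurable (aemeasurable_pi_lambda _ hX)
      (measurableSet_setOf_forall_le_add i c)]
  rfl

theorem integral_expMeasure {r : ℝ} (hr : 0 ≤ r) (g : ℝ → ℝ) :
    ∫ t, g t ∂expMeasure r = ∫ t in Ioi 0, r * exp (-(r * t)) * g t := by
  have hpdf (t : ℝ) : (exponentialPDF r t).toReal • g t =
      (Ici 0).indicator (fun t => r * exp (-(r * t)) * g t) t := by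
    by_cases ht : 0 ≤ t
    · simp [exponentialPDF_of_nonneg ht, ht, hr, (exp_pos _).le]
    · simp [exponentialPDF_of_neg (not_le.1 ht), ht]
  rw [← integral_Ici_eq_integral_Ioi, ← integral_indicator measurableSet_Ici, ← funext hpdf]
  exact integral_withDensity_eq_integral_toReal_smul
    (measurable_exponentialPDFReal r).ennreal_ofReal (ae_of_all _ fun _ => ENNReal.ofReal_lt_top) g

theorem integral_exp_neg_mul_one_sub_exp_pow {c : ℝ} (hc : 0 ≤ c) (n : ℕ) :
    ∫ t in Ioi 0, exp (-t) * (1 - exp (-(t + c))) ^ n =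
      exp c / (n + 1) * (1 - (1 - exp (-c)) ^ (n + 1)) := by
  set g : ℝ → ℝ := fun t => exp c / (n + 1) * (1 - exp (-(t + c))) ^ (n + 1)
  have hderiv (t : ℝ) : HasDerivAt g (exp (-t) * (1 - exp (-(t + c))) ^ n) t := by
    have h1 : HasDerivAt (fun t => 1 - exp (-(t + c))) (exp (-(t + c))) t := by
      simpa using ((hasDerivAt_id t).add_const c).neg.exp.const_sub 1
    refine ((h1.pow (n + 1)).const_mul (exp c / (n + 1))).congr_deriv ?_
    rw [show exp (-t) = exp c * exp (-(t + c)) by rw [← exp_add]; ring_nf]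
    push_cast
    field_simp
  have hlim : Tendsto g atTop (𝓝 (exp c / (n + 1) * (1 - 0) ^ (n + 1))) := by
    refine ((tendsto_exp_atBot.comp ?_).const_sub 1 |>.pow (n + 1)).const_mul _
    exact tendsto_neg_atTop_atBot.comp (tendsto_atTop_add_const_right _ c tendsto_id)
  rw [integral_Ioi_of_hasDerivAt_of_nonneg' (fun t _ => hderiv t) (fun t ht => ?_) hlim]
  · simp [g]; ring
  · have : exp (-(t + c)) ≤ 1 := exp_le_one_iff.2 (by linarith [mem_Ioi.1 ht])
    have : 0 ≤ 1 - exp (-(t + c)) := by linarith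
    positivity

theorem integral_cdf_expMeasure_pow {c : ℝ} (hc : 0 ≤ c) (n : ℕ) :
    ∫ t, cdf (expMeasure 1) (t + c) ^ n ∂expMeasure 1 =
      exp c / (n + 1) * (1 - (1 - exp (-c)) ^ (n + 1)) := by
  rw [integral_expMeasure zero_le_one, ← integral_exp_neg_mul_one_sub_exp_pow hc n]
  refine setIntegral_congr_fun measurableSet_Ioi fun t (ht : 0 < t) => ?_
  simp [cdf_expMeasure_eq one_pos, (by linarith : 0 ≤ t + c)]

theorem exp_mul_one_sub_pow_eq_geom_sum (c : ℝ) (n : ℕ) :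
    exp c * (1 - (1 - exp (-c)) ^ n) = ∑ i ∈ Finset.range n, (1 - exp (-c)) ^ i := by
  rw [← mul_neg_geom_sum, sub_sub_cancel, ← mul_assoc, ← exp_add, add_neg_cancel, exp_zero,
    one_mul]

theorem stmt6_general {Ω : Type*} [MeasureSpace Ω] [IsProbabilityMeasure (ℙ : Measure Ω)]
    (k : ℕ) (hk : 0 < k)
    (X : Fin k → Ω → ℝ)
    (hindep : iIndepFun X ℙ)
    (hdist : ∀ i, Measure.map (X i) ℙ = expMeasure 1)
    (c : ℝ) (hc : 0 < c) :
    (∫ ω, ((Finset.univ.filter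
        (fun i : Fin k => (⨆ j, X j ω) - c ≤ X i ω)).card : ℝ))
      = 1 + ∑ i ∈ Finset.Icc 1 (k - 1), (1 - Real.exp (-c)) ^ i ∧
    1 + ∑ i ∈ Finset.Icc 1 (k - 1), (1 - Real.exp (-c)) ^ i ≤ Real.exp c := by
  obtain ⟨n, rfl⟩ : ∃ n, k = n + 1 := ⟨k - 1, by omega⟩
  have := isProbabilityMeasure_expMeasure one_pos
  have hX (i : Fin (n + 1)) : AEMeasurable (X i) ℙ :=
    .of_map_ne_zero (by simp [hdist, IsProbabilityMeasure.ne_zero])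
  have hevent (ω : Ω) (i : Fin (n + 1)) :
      (⨆ j, X j ω) - c ≤ X i ω ↔ ∀ j, X j ω ≤ X i ω + c := by
    rw [sub_le_iff_le_add, ciSup_le_iff (finite_range _).bddAbove]
  have hsum : 1 + ∑ i ∈ Finset.Icc 1 (n + 1 - 1), (1 - exp (-c)) ^ i =
      exp c * (1 - (1 - exp (-c)) ^ (n + 1)) := by
    rw [exp_mul_one_sub_pow_eq_geom_sum, Finset.sum_range_eq_add_Ico _ n.succ_pos,
      Nat.succ_eq_add_one, Finset.Ico_add_one_right_eq_Icc, pow_zero, Nat.add_sub_cancel]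
  simp_rw [hevent, hsum]
  rw [integral_card_filter ℙ (fun i ω => ∀ j, X j ω ≤ X i ω + c) fun i =>
    (aemeasurable_pi_lambda _ hX).nullMeasurable (measurableSet_setOf_forall_le_add i c)]
  simp_rw [measureReal_forall_le_add_of_iid hX hindep hdist _ hc.le,
    integral_cdf_expMeasure_pow hc.le]
  refine ⟨?_, mul_le_of_le_one_right (exp_pos c).le (sub_le_self _ (pow_nonneg ?_ _))⟩
  · simp only [Finset.sum_const, Finset.card_univ, Fintype.card_fin, nsmul_eq_mul]
    push_cast
    field_simp
  · linarith [exp_le_one_iff.2 (neg_nonpos.2 hc.le)]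

/-- For `k` i.i.d. `Exp(1)` random variables, the expected number of samples within
an additive `c` of the maximum equals `1 + Σ_{i=1}^{k-1} (1 - e^{-c})^i ≤ e^c`. -/
theorem stmt6 {Ω : Type*} [MeasureSpace Ω] [IsProbabilityMeasure (ℙ : Measure Ω)]
    (k : ℕ) (hk : 0 < k)
    (X : Fin k → Ω → ℝ) (hmeas : ∀ i, Measurable (X i))
    (hindep : iIndepFun X ℙ)
    (hdist : ∀ i, Measure.map (X i) ℙ = expMeasure 1)
    (c : ℝ) (hc : 0 < c) :
    (∫ ω, ((Finset.univ.filter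
        (fun i : Fin k => (⨆ j, X j ω) - c ≤ X i ω)).card : ℝ))
      = 1 + ∑ i ∈ Finset.Icc 1 (k - 1), (1 - Real.exp (-c)) ^ i ∧
    1 + ∑ i ∈ Finset.Icc 1 (k - 1), (1 - Real.exp (-c)) ^ i ≤ Real.exp c :=
  stmt6_general k hk X hindep hdist c hc
end
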